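/- Let F be a field of characteristic not 2, let D be a quaternion division algebra over F with norm form q_D = ⟨1, -a, -b, ab⟩, and let c ∈ F^×. Then F(√c) embeds as a maximal subfield of D if and only if c is not a square in F and there exist x, y, z ∈ F with c = a·x² + b·y² − a·b·z². -/

import Mathlib

set_option synthInstance.maxHeartbeats 1000000
set_option maxHeartbeats 1000000

open Quaternion Polynomial

/-- The diagonal quadratic form `⟨w i⟩_{i : ι}` over a commutative ring `R`. -/
noncomputable def diagQF (R : Type) [CommRing R] {ι : Type} [Fintype ι] (w : ι → R) :
    QuadraticForm R (ι → R) :=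
  QuadraticMap.weightedSumSquares R w

/-- The orthogonal sum of `m` hyperbolic planes, realized as the split form
`⟨1, -1, 1, -1, …⟩` of dimension `2 * m` (valid in characteristic `≠ 2`). -/
noncomputable def hypQF (R : Type) [CommRing R] (m : ℕ) : QuadraticForm R (Fin (2 * m) → R) :=
  diagQF R (fun i => if (i : ℕ) % 2 = 0 then (1 : R) else -1)

/-- Two quadratic forms are Witt equivalent if they become isometric after adding
(split) hyperbolic spaces to each of them. -/
def WittEquiv (R : Type) [CommRing R] {M₁ M₂ : Type} [AddCommGroup M₁] [Module R M₁]
    [AddCommGroup M₂] [Module R M₂]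
    (q₁ : QuadraticForm R M₁) (q₂ : QuadraticForm R M₂) : Prop :=
  ∃ m n : ℕ, QuadraticMap.Equivalent (q₁.prod (hypQF R m)) (q₂.prod (hypQF R n))

/-- The quadratic algebra `R(√c) = R[X]/(X² - c)`. -/
noncomputable def QuadExt (R : Type) [CommRing R] (c : R) : Type :=
  AdjoinRoot (X ^ 2 - C c : R[X])

noncomputable instance (R : Type) [CommRing R] (c : R) : CommRing (QuadExt R c) :=
  inferInstanceAs (CommRing (AdjoinRoot _))

noncomputable instance (R : Type) [CommRing R] (c : R) : Algebra R (QuadExt R c) :=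
  inferInstanceAs (Algebra R (AdjoinRoot _))

/-- `R(√c)` embeds into the `R`-algebra `D` (for `c` a nonsquare and `D` a quaternion
division algebra this says exactly that `R(√c)` is a maximal subfield of `D`). -/
def EmbedsIn (R : Type) [CommRing R] (c : R) (D : Type) [Ring D] [Algebra R D] : Prop :=
  ∃ f : QuadExt R c →ₐ[R] D, Function.Injective f

/-- A (nontrivial) ring is a division ring iff every nonzero element is a unit. -/
def IsDivisionAlgebra (D : Type) [Ring D] : Prop :=
  ∀ x : D, x ≠ 0 → IsUnit x

/-- The quaternion algebras `(a,b/R)` and `(a',b'/R)` are linked: they share a common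
quadratic (maximal) subfield `R(√c)`. -/
noncomputable def LinkedAlg (R : Type) [CommRing R] (a b a' b' : R) : Prop :=
  ∃ c : R, ¬ IsSquare c ∧ EmbedsIn R c ℍ[R, a, b] ∧ EmbedsIn R c ℍ[R, a', b']

open MvPolynomial in
/-- The quadratic polynomial `∑ w i * xᵢ²` associated to the diagonal form `⟨w⟩`. -/
noncomputable def quadricPoly (F : Type) [Field F] {n : ℕ} (w : Fin n → F) :
    MvPolynomial (Fin n) F :=
  ∑ i, MvPolynomial.C (w i) * MvPolynomial.X i ^ 2

/-- The "big" function field `F[φ] = Frac(F[x₁,…,xₙ]/(φ))` of the quadric `φ = 0`,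
for the diagonal form `φ = ⟨w⟩`. -/
noncomputable abbrev FunctionFieldQF (F : Type) [Field F] {n : ℕ} (w : Fin n → F) : Type :=
  FractionRing (MvPolynomial (Fin n) F ⧸ Ideal.span {quadricPoly F w})

/-!
An algebra map `F(√c) → D` is the same as a square root `u` of `c` in `D`, and it is injective
as soon as `c` is a nonsquare, since `F(√c)` is then a field. Conversely, in a division algebra
a square root of `c = s²` would be `± s`, so `√c ∓ s` would lie in the kernel.

In `(a,b/F)`, `u² = (re u)² + a x² + b y² - a b z² + 2 (re u) (x i + y j + z ij)` for
`u = re u + x i + y j + z ij`. If `c` is a nonsquare and `u² = c`, the imaginary part forces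
`re u = 0` (as `2 ≠ 0`), and the real part then reads `c = a x² + b y² - a b z²`; conversely such
`x, y, z` give the pure square root `x i + y j + z ij`.
-/

namespace QuadExt

variable {R : Type} [CommRing R] {c : R}

variable (R c) in
noncomputable def root : QuadExt R c :=
  AdjoinRoot.root (X ^ 2 - C c : R[X])

theorem root_mul_root : root R c * root R c = algebraMap R (QuadExt R c) c := by
  have h := AdjoinRoot.eval₂_root (X ^ 2 - C c : R[X])
  rw [eval₂_sub, eval₂_C, eval₂_pow, eval₂_X, sub_eq_zero, ← AdjoinRoot.algebraMap_eq] at h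
  rw [← sq]
  exact h

theorem root_sub_algebraMap_ne_zero [Nontrivial R] (s : R) :
    root R c - algebraMap R (QuadExt R c) s ≠ 0 := by
  have hmonic : (X ^ 2 - C c : R[X]).Monic := monic_X_pow_sub_C c two_ne_zero
  refine AdjoinRoot.mk_ne_zero_of_natDegree_lt (g := X - C s) hmonic (X_sub_C_ne_zero s) ?_
  rw [natDegree_X_pow_sub_C, natDegree_X_sub_C]
  norm_num

noncomputable def lift {D : Type} [Ring D] [Algebra R D] (u : D)
    (hu : u * u = algebraMap R D c) : QuadExt R c →ₐ[R] D :=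
  Ideal.Quotient.liftₐ _ (aeval u) fun p hp => by
    obtain ⟨q, rfl⟩ := Ideal.mem_span_singleton'.1 hp
    simp [sq, hu]

end QuadExt

theorem IsDivisionAlgebra.noZeroDivisors {D : Type} [Ring D] (hD : IsDivisionAlgebra D) :
    NoZeroDivisors D where
  eq_zero_or_eq_zero_of_mul_eq_zero {x y} hxy := by
    refine or_iff_not_imp_left.2 fun hx => (hD x hx).mul_left_cancel ?_
    rw [hxy, mul_zero]

namespace EmbedsIn

variable {R : Type} [CommRing R] {c : R} {D : Type} [Ring D] [Algebra R D]

theorem exists_mul_self_eq_algebraMap (h : EmbedsIn R c D) :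
    ∃ u : D, u * u = algebraMap R D c := by
  obtain ⟨f, -⟩ := h
  exact ⟨f (QuadExt.root R c), by rw [← map_mul, QuadExt.root_mul_root, f.commutes]⟩

theorem not_isSquare [Nontrivial R] [NoZeroDivisors D] (h : EmbedsIn R c D) : ¬ IsSquare c := by
  rintro ⟨s, rfl⟩
  obtain ⟨f, hf⟩ := h
  have hprod : (f (QuadExt.root R (s * s)) - algebraMap R D s) *
      (f (QuadExt.root R (s * s)) + algebraMap R D s) = 0 := by
    rw [mul_add, sub_mul, sub_mul, ← map_mul, QuadExt.root_mul_root, f.commutes, map_mul,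
      Algebra.commutes s (f (QuadExt.root R (s * s)))]
    abel
  rcases mul_eq_zero.1 hprod with h | h
  · refine QuadExt.root_sub_algebraMap_ne_zero s (hf ?_)
    rw [map_sub, f.commutes, h, map_zero]
  · refine QuadExt.root_sub_algebraMap_ne_zero (-s) (hf ?_)
    rw [map_sub, f.commutes, map_neg, sub_neg_eq_add, h, map_zero]

end EmbedsIn

theorem embedsIn_iff_exists_mul_self_eq_algebraMap {F : Type} [Field F] {c : F}
    (hc : ¬ IsSquare c) {D : Type} [Ring D] [Nontrivial D] [Algebra F D] :
    EmbedsIn F c D ↔ ∃ u : D, u * u = algebraMap F D c := by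
  refine ⟨EmbedsIn.exists_mul_self_eq_algebraMap, fun ⟨u, hu⟩ => ?_⟩
  have : Fact (Irreducible (X ^ 2 - C c : F[X])) :=
    ⟨X_pow_sub_C_irreducible_of_prime Nat.prime_two fun s hs => hc ⟨s, by rw [← hs, sq]⟩⟩
  have : IsSimpleRing (QuadExt F c) := inferInstanceAs (IsSimpleRing (AdjoinRoot _))
  exact ⟨QuadExt.lift u hu, (QuadExt.lift u hu).toRingHom.injective⟩

namespace QuaternionAlgebra

variable {R : Type} [CommRing R] {a b : R}

theorem re_mul_self (u : ℍ[R, a, b]) :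
    (u * u).re = u.re ^ 2 + a * u.imI ^ 2 + b * u.imJ ^ 2 - a * b * u.imK ^ 2 := by
  simp only [re_mul]
  ring

theorem imI_mul_self (u : ℍ[R, a, b]) : (u * u).imI = 2 * u.re * u.imI := by
  simp only [imI_mul]
  ring

theorem imJ_mul_self (u : ℍ[R, a, b]) : (u * u).imJ = 2 * u.re * u.imJ := by
  simp only [imJ_mul]
  ring

theorem imK_mul_self (u : ℍ[R, a, b]) : (u * u).imK = 2 * u.re * u.imK := by
  simp only [imK_mul]
  ring

theorem re_eq_zero_of_mul_self_eq_algebraMap [NoZeroDivisors R] (h2 : (2 : R) ≠ 0) {c : R}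
    (hc : ¬ IsSquare c) {u : ℍ[R, a, b]} (hu : u * u = algebraMap R _ c) : u.re = 0 := by
  by_contra hre
  have hcancel {x : R} (hx : 2 * u.re * x = 0) : x = 0 := by
    simpa [h2, hre] using hx
  have hI : u.imI = 0 := hcancel (by rw [← imI_mul_self, hu, algebraMap_eq])
  have hJ : u.imJ = 0 := hcancel (by rw [← imJ_mul_self, hu, algebraMap_eq])
  have hK : u.imK = 0 := hcancel (by rw [← imK_mul_self, hu, algebraMap_eq])
  have hre_sq := re_mul_self u
  rw [hu, hI, hJ, hK, algebraMap_eq] at hre_sq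
  exact hc ⟨u.re, by linear_combination hre_sq⟩

theorem exists_mul_self_eq_algebraMap_iff [NoZeroDivisors R] (h2 : (2 : R) ≠ 0) {c : R}
    (hc : ¬ IsSquare c) :
    (∃ u : ℍ[R, a, b], u * u = algebraMap R _ c) ↔
      ∃ x y z : R, c = a * x ^ 2 + b * y ^ 2 - a * b * z ^ 2 := by
  constructor
  · rintro ⟨u, hu⟩
    have hre_sq := re_mul_self u
    rw [hu, re_eq_zero_of_mul_self_eq_algebraMap h2 hc hu, algebraMap_eq] at hre_sq
    exact ⟨u.imI, u.imJ, u.imK, by linear_combination hre_sq⟩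
  · rintro ⟨x, y, z, rfl⟩
    refine ⟨⟨0, x, y, z⟩, ?_⟩
    ext <;> simp [algebraMap_eq] <;> ring

end QuaternionAlgebra

theorem maximal_subfield_iff_represented_general (F : Type) [Field F] (hchar : (2 : F) ≠ 0)
    (a b c : F)
    (hdiv : IsDivisionAlgebra ℍ[F, a, b]) :
    EmbedsIn F c ℍ[F, a, b] ↔
      ¬ IsSquare c ∧ ∃ x y z : F, c = a * x ^ 2 + b * y ^ 2 - a * b * z ^ 2 := by
  have := hdiv.noZeroDivisors
  by_cases hc : IsSquare c
  · exact iff_of_false (fun h => h.not_isSquare hc) fun h => h.1 hc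
  rw [embedsIn_iff_exists_mul_self_eq_algebraMap hc,
    QuaternionAlgebra.exists_mul_self_eq_algebraMap_iff hchar hc, and_iff_right hc]

/-- Let `F` be a field of characteristic `≠ 2`, `D = (a,b/F)` a quaternion
division algebra with norm form `⟨1,-a,-b,ab⟩`, and `c ∈ F^×`.  Then `F(√c)` embeds as a
maximal subfield of `D` iff `c` is a nonsquare and `c = a x² + b y² - a b z²` for some
`x, y, z ∈ F`.  (For a quaternion division algebra every quadratic subfield is a maximal
subfield, so `EmbedsIn` captures embedding as a maximal subfield.) -/
theorem maximal_subfield_iff_represented (F : Type) [Field F] (hchar : (2 : F) ≠ 0)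
    (a b c : F) (ha : a ≠ 0) (hb : b ≠ 0) (hc : c ≠ 0)
    (hdiv : IsDivisionAlgebra ℍ[F, a, b]) :
    EmbedsIn F c ℍ[F, a, b] ↔
      ¬ IsSquare c ∧ ∃ x y z : F, c = a * x ^ 2 + b * y ^ 2 - a * b * z ^ 2 :=
  maximal_subfield_iff_represented_general F hchar a b c hdiv
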